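/- Let p < n and let {A,B} be an (m,p,n)-GMP with GSVD as in the context, with generalized singular values (αᵢ, βᵢ). If n−p < ⌊n/2⌋, then for every ⌊n/2⌋+1 ≤ i ≤ n both formulations hold: βᵢ² = max_{Ψ ∈ 𝕌_p} Re tr(Bᴴ Ψᴴ 𝒫_i Ψ B (AᴴA + BᴴB)^{-1}) − max_{Ψ ∈ 𝕌_p} Re tr(Bᴴ Ψᴴ 𝒫_{i+1} Ψ B (AᴴA + BᴴB)^{-1}) and βᵢ = max_{Ξ₃ ∈ 𝕌_n, Ξ₄ ∈ 𝕌_p} |tr(Ξ₃ (AᴴA + BᴴB)^{-1/2} Bᴴ Ξ₄ 𝒲_i)| − max_{Ξ₃ ∈ 𝕌_n, Ξ₄ ∈ 𝕌_p} |tr(Ξ₃ (AᴴA + BᴴB)^{-1/2} Bᴴ Ξ₄ 𝒲_{i+1})|. If instead n−p > ⌊n/2⌋, then β_{⌊n/2⌋+1} = ⋯ = β_{n−p} = 0 and the same two formulations hold for every n−p+1 ≤ i ≤ n. -/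

import Mathlib

/-!
Write `B = V Σ R` with `Σ = diag(β ∘ g) E`, where `g = tailIndex : Fin p → Fin n` enumerates the
last `p` indices and `E` is the corresponding `p × n` selection matrix; then `AᴴA + BᴴB = RᴴR`.
After cycling the trace, both functionals take the form `tr (diag b · Z · diag 𝟙_P · Y)`: for the
first, `b = β² ∘ g`, `Z = Uᴴ`, `Y = U` with `U = ΦV`; for the second, `b = β ∘ g`,
`Z = VᴴΞ₄` and `Y` is the principal submatrix on `range g` of `Ξ₃ S⁻¹ Rᴴ`, which is unitary
because `S² = RᴴR`. The entries of such `Z`, `Y` have row and column square sums at most `1`,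
so by AM-GM `|tr (⋯)| ≤ ∑ b_k c_k` with weights `0 ≤ c_k ≤ 1` of total at most `#P`. As `b` is
increasing and `P` is an upper set, this is at most `∑_{k ∈ P} b_k`, with equality at
`Z = Y = 1`. So each maximum is a tail sum of `β²` or `β`, and consecutive differences
isolate `βᵢ²` and `βᵢ`.
-/

open Matrix BigOperators
open scoped ComplexOrder
open Finset Function

theorem Finset.sum_mul_le_sum_filter {ι : Type*} [Fintype ι] (b c : ι → ℝ) (P : ι → Prop)
    [DecidablePred P] (hb0 : ∀ k, 0 ≤ b k) (hbP : ∀ j, P j → ∀ k, ¬ P k → b k ≤ b j)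
    (hc0 : ∀ k, 0 ≤ c k) (hc1 : ∀ k, c k ≤ 1) (hc : ∑ k, c k ≤ #{k | P k}) :
    ∑ k, b k * c k ≤ ∑ k with P k, b k := by
  obtain ⟨δ, hδ0, hδP, hδnP⟩ :
      ∃ δ : ℝ, 0 ≤ δ ∧ (∀ j, P j → δ ≤ b j) ∧ ∀ k, ¬ P k → b k ≤ δ := by
    by_cases hT : ({k | P k} : Finset ι).Nonempty
    · exact ⟨_, le_inf' hT _ fun j _ => hb0 j, fun j hj => inf'_le _ (by simpa using hj),
        fun k hk => le_inf' hT _ fun j hj => hbP j (by simpa using hj) k hk⟩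
    · exact ⟨∑ k, b k, sum_nonneg fun k _ => hb0 k,
        fun j hj => (hT ⟨j, by simpa using hj⟩).elim,
        fun k _ => single_le_sum (fun k _ => hb0 k) (mem_univ k)⟩
  -- summed over `k`, these give `∑ b c - ∑_P b ≤ δ (∑ c - #P) ≤ 0`
  have hterm : ∀ k, b k * c k - (if P k then b k else 0) ≤ δ * (c k - if P k then 1 else 0) := by
    intro k
    by_cases hk : P k
    · simp only [hk, if_true]; nlinarith [hδP k hk, hc1 k]
    · simp only [hk, if_false]; nlinarith [hδnP k hk, hc0 k]
  have hsum := sum_le_sum fun k (_ : k ∈ univ) => hterm k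
  rw [sum_sub_distrib, ← mul_sum, sum_sub_distrib, ← sum_filter, sum_boole] at hsum
  nlinarith

theorem Finset.sum_comp_le_sum_of_injective {α β : Type*} [Fintype α] [Fintype β]
    {g : α → β} (hg : Injective g) {w : β → ℝ} (hw : ∀ b, 0 ≤ w b) :
    ∑ a, w (g a) ≤ ∑ b, w b :=
  calc ∑ a, w (g a) = ∑ b ∈ univ.map ⟨g, hg⟩, w b := (sum_map univ ⟨g, hg⟩ w).symm
    _ ≤ ∑ b, w b := sum_le_sum_of_subset_of_nonneg (subset_univ _) fun b _ _ => hw b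

theorem sum_norm_mul_norm_le_one {ι : Type*} [Fintype ι] {u v : ι → ℂ}
    (hu : ∑ j, ‖u j‖ ^ 2 ≤ 1) (hv : ∑ j, ‖v j‖ ^ 2 ≤ 1) : ∑ j, ‖u j‖ * ‖v j‖ ≤ 1 := by
  have h : ∑ j, ‖u j‖ * ‖v j‖ ≤ ∑ j, (‖u j‖ ^ 2 + ‖v j‖ ^ 2) / 2 :=
    sum_le_sum fun j _ => by nlinarith [two_mul_le_add_sq ‖u j‖ ‖v j‖]
  rw [← sum_div, sum_add_distrib] at h
  linarith

theorem ciSup_eq_of_forall_le_of_eq {α β : Type*} [ConditionallyCompleteLattice α] {f : β → α}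
    {a : α} (hle : ∀ x, f x ≤ a) (x₀ : β) (hx₀ : f x₀ = a) : ⨆ x, f x = a :=
  haveI : Nonempty β := ⟨x₀⟩
  ciSup_eq_of_forall_le_of_forall_lt_exists_gt hle fun _ hw => ⟨x₀, hx₀ ▸ hw⟩

namespace Matrix

section DoublySubstochastic

variable {ι κ : Type*} [Fintype ι] [Fintype κ]

def NormSqDoublySubstochastic (Z : Matrix ι κ ℂ) : Prop :=
  (∀ i, ∑ j, ‖Z i j‖ ^ 2 ≤ 1) ∧ ∀ j, ∑ i, ‖Z i j‖ ^ 2 ≤ 1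

theorem sum_norm_sq_row_eq_one_of_mem_unitaryGroup [DecidableEq ι] {U : Matrix ι ι ℂ}
    (hU : U ∈ unitaryGroup ι ℂ) (i : ι) : ∑ j, ‖U i j‖ ^ 2 = 1 := by
  have h := congr_fun (congr_fun (mem_unitaryGroup_iff.mp hU) i) i
  simp only [mul_apply, star_apply, one_apply_eq, ← starRingEnd_apply, Complex.mul_conj'] at h
  exact_mod_cast h

theorem normSqDoublySubstochastic_of_mem_unitaryGroup [DecidableEq ι] {U : Matrix ι ι ℂ}
    (hU : U ∈ unitaryGroup ι ℂ) : U.NormSqDoublySubstochastic := by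
  refine ⟨fun i => (sum_norm_sq_row_eq_one_of_mem_unitaryGroup hU i).le, fun j => ?_⟩
  have h := sum_norm_sq_row_eq_one_of_mem_unitaryGroup (Unitary.star_mem hU) j
  simp only [star_apply, norm_star] at h
  exact h.le

theorem NormSqDoublySubstochastic.submatrix {ι' κ' : Type*} [Fintype ι'] [Fintype κ']
    {Z : Matrix ι κ ℂ} (hZ : Z.NormSqDoublySubstochastic) {f : ι' → ι} {g : κ' → κ}
    (hf : Injective f) (hg : Injective g) : (Z.submatrix f g).NormSqDoublySubstochastic :=
  ⟨fun i => (sum_comp_le_sum_of_injective hg fun _ => by positivity).trans (hZ.1 (f i)),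
    fun j => (sum_comp_le_sum_of_injective hf fun _ => by positivity).trans (hZ.2 (g j))⟩

variable [DecidableEq ι]

theorem norm_trace_diagonal_mul_mul_diagonal_mul_le (b : ι → ℝ) (P : ι → Prop)
    [DecidablePred P] (hb0 : ∀ k, 0 ≤ b k) (hbP : ∀ j, P j → ∀ k, ¬ P k → b k ≤ b j)
    {Z Y : Matrix ι ι ℂ} (hZ : Z.NormSqDoublySubstochastic) (hY : Y.NormSqDoublySubstochastic) :
    ‖trace (diagonal (fun k => (b k : ℂ)) * Z * diagonal (fun k => if P k then 1 else 0) * Y)‖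
      ≤ ∑ k with P k, b k := by
  set c : ι → ℝ := fun k => ∑ j, if P j then ‖Z k j‖ * ‖Y j k‖ else 0
  have htrace : trace (diagonal (fun k => (b k : ℂ)) * Z *
      diagonal (fun k => if P k then 1 else 0) * Y)
      = ∑ k, (b k : ℂ) * ∑ j, if P j then Z k j * Y j k else 0 := by
    simp only [trace, diag_apply]
    refine sum_congr rfl fun k _ => ?_
    simp only [mul_apply (M := _ * diagonal _), mul_diagonal, diagonal_mul, mul_sum]
    refine sum_congr rfl fun j _ => ?_
    split_ifs <;> ring
  have hnorm : ‖trace (diagonal (fun k => (b k : ℂ)) * Z *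
      diagonal (fun k => if P k then 1 else 0) * Y)‖ ≤ ∑ k, b k * c k := by
    rw [htrace]
    refine (norm_sum_le _ _).trans (sum_le_sum fun k _ => ?_)
    rw [norm_mul, Complex.norm_real, Real.norm_of_nonneg (hb0 k)]
    refine mul_le_mul_of_nonneg_left ((norm_sum_le _ _).trans (sum_le_sum fun j _ => ?_)) (hb0 k)
    split_ifs <;> simp
  refine hnorm.trans (sum_mul_le_sum_filter b c P hb0 hbP (fun k => ?_) (fun k => ?_) ?_)
  · exact sum_nonneg fun j _ => by split_ifs <;> positivity
  · refine le_trans (sum_le_sum fun j _ => ?_) (sum_norm_mul_norm_le_one (hZ.1 k) (hY.2 k))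
    split_ifs
    exacts [le_rfl, by positivity]
  · rw [sum_comm, ← sum_boole]
    refine sum_le_sum fun j _ => ?_
    split_ifs
    · exact sum_norm_mul_norm_le_one (hZ.2 j) (hY.1 j)
    · simp

theorem trace_diagonal_mul_diagonal_indicator (b : ι → ℝ) (P : ι → Prop) [DecidablePred P] :
    trace (diagonal (fun k => (b k : ℂ)) * diagonal (fun k => if P k then 1 else 0))
      = ((∑ k with P k, b k : ℝ) : ℂ) := by
  simp [trace_diagonal, diagonal_mul_diagonal, sum_filter, apply_ite]

end DoublySubstochastic

section Selection

theorem submatrix_one_mul_mul_conjTranspose {ι κ : Type*} [Fintype κ] [DecidableEq κ]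
    (g : ι → κ) (Y : Matrix κ κ ℂ) :
    (1 : Matrix κ κ ℂ).submatrix g id * Y * ((1 : Matrix κ κ ℂ).submatrix g id)ᴴ
      = Y.submatrix g g := by
  ext k k'
  simp [mul_apply, one_apply]

theorem submatrix_one_mul_conjTranspose {ι κ : Type*} [DecidableEq ι] [Fintype κ]
    [DecidableEq κ] {g : ι → κ} (hg : Injective g) :
    (1 : Matrix κ κ ℂ).submatrix g id * ((1 : Matrix κ κ ℂ).submatrix g id)ᴴ = 1 := by
  simpa [submatrix_one _ hg] using submatrix_one_mul_mul_conjTranspose g 1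

theorem conjTranspose_submatrix_one_mul_diagonal_mul {ι κ : Type*} [Fintype ι] [DecidableEq ι]
    [DecidableEq κ] {g : ι → κ} (hg : Injective g) (d : κ → ℂ)
    (hd : ∀ l, l ∉ Set.range g → d l = 0) :
    ((1 : Matrix κ κ ℂ).submatrix g id)ᴴ * diagonal (d ∘ g) * (1 : Matrix κ κ ℂ).submatrix g id
      = diagonal d := by
  ext l l'
  simp only [conjTranspose_submatrix, conjTranspose_one, mul_apply, submatrix_apply, one_apply,
    id_eq, diagonal_apply, mul_ite, ite_mul, one_mul, zero_mul, mul_zero, sum_ite_eq',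
    mem_univ, ↓reduceIte, mul_one]
  by_cases hl' : l' ∈ Set.range g
  · obtain ⟨k, rfl⟩ := hl'
    rw [sum_eq_single k (fun j _ hj => if_neg (hg.ne hj)) (by simp), if_pos rfl]
    split_ifs with h <;> simp [h]
  · rw [sum_eq_zero fun j _ => if_neg fun h => hl' ⟨j, h⟩]
    split_ifs with h
    · rw [h, hd l' hl']
    · rfl

end Selection

theorem mul_conjTranspose_mem_unitaryGroup_of_mul_self {κ : Type*} [Fintype κ] [DecidableEq κ]
    {S R : Matrix κ κ ℂ} (hS : S.IsHermitian) (hSdet : IsUnit S.det) (hSR : S * S = Rᴴ * R) :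
    S⁻¹ * Rᴴ ∈ unitaryGroup κ ℂ := by
  rw [mem_unitaryGroup_iff, star_eq_conjTranspose, conjTranspose_mul, conjTranspose_conjTranspose,
    conjTranspose_nonsing_inv, hS.eq, Matrix.mul_assoc, ← Matrix.mul_assoc Rᴴ, ← hSR,
    Matrix.mul_assoc, mul_nonsing_inv _ hSdet, Matrix.mul_one, nonsing_inv_mul _ hSdet]

section GSVD

variable {ι κ : Type*} [Fintype ι] [Fintype κ] [DecidableEq ι] [DecidableEq κ] {g : ι → κ}

theorem conjTranspose_mul_add_conjTranspose_mul_eq {m : Type*} [Fintype m] (hg : Injective g)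
    (β : κ → ℝ) (hβ : ∀ l, l ∉ Set.range g → β l = 0) {A : Matrix m κ ℂ} {B : Matrix ι κ ℂ}
    {V : Matrix ι ι ℂ} (hV : V ∈ unitaryGroup ι ℂ) {R : Matrix κ κ ℂ}
    (hB : B = V * (diagonal (fun k => (β (g k) : ℂ)) * (1 : Matrix κ κ ℂ).submatrix g id) * R)
    (hAA : Aᴴ * A = Rᴴ * diagonal (fun l => ((1 - β l ^ 2 : ℝ) : ℂ)) * R) :
    Aᴴ * A + Bᴴ * B = Rᴴ * R := by
  set Sg := diagonal (fun k => (β (g k) : ℂ)) * (1 : Matrix κ κ ℂ).submatrix g id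
  have hSg : Sgᴴ * Sg = diagonal (fun l => ((β l ^ 2 : ℝ) : ℂ)) := by
    rw [← conjTranspose_submatrix_one_mul_diagonal_mul hg _ fun l hl => by simp [hβ l hl],
      conjTranspose_mul, diagonal_conjTranspose, Matrix.mul_assoc, ← Matrix.mul_assoc (diagonal _),
      diagonal_mul_diagonal, ← Matrix.mul_assoc]
    congr 3
    ext k
    simp [sq]
  have hBB : Bᴴ * B = Rᴴ * (Sgᴴ * (star V * V) * Sg) * R := by
    rw [hB]
    simp only [conjTranspose_mul, star_eq_conjTranspose, Matrix.mul_assoc]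
  rw [Unitary.star_mul_self_of_mem hV, Matrix.mul_one, hSg] at hBB
  rw [hAA, hBB, ← Matrix.add_mul, ← Matrix.mul_add, diagonal_add]
  simp

theorem trace_conjTranspose_mul_mul_inv (hg : Injective g) (b : ι → ℝ)
    {V Φ Pm : Matrix ι ι ℂ} {R : Matrix κ κ ℂ} (hR : IsUnit R.det) {B : Matrix ι κ ℂ}
    (hB : B = V * (diagonal (fun k => (b k : ℂ)) * (1 : Matrix κ κ ℂ).submatrix g id) * R) :
    trace (Bᴴ * Φᴴ * Pm * Φ * B * (Rᴴ * R)⁻¹)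
      = trace (diagonal (fun k => ((b k ^ 2 : ℝ) : ℂ)) * (Φ * V)ᴴ * Pm * (Φ * V)) := by
  set Sg := diagonal (fun k => (b k : ℂ)) * (1 : Matrix κ κ ℂ).submatrix g id
  have hSg : Sg * Sgᴴ = diagonal (fun k => ((b k ^ 2 : ℝ) : ℂ)) := by
    rw [conjTranspose_mul, Matrix.mul_assoc, ← Matrix.mul_assoc (submatrix _ _ _),
      submatrix_one_mul_conjTranspose hg, Matrix.one_mul, diagonal_conjTranspose,
      diagonal_mul_diagonal]
    congr 1
    ext k
    simp [sq]
  have hRH : IsUnit Rᴴ.det := by rw [det_conjTranspose]; exact hR.star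
  set X := Sgᴴ * ((Φ * V)ᴴ * Pm * (Φ * V)) * Sg
  calc trace (Bᴴ * Φᴴ * Pm * Φ * B * (Rᴴ * R)⁻¹) = trace (Rᴴ * (X * Rᴴ⁻¹)) := by
        rw [hB, mul_inv_rev]
        simp only [X, conjTranspose_mul, Matrix.mul_assoc, mul_nonsing_inv_cancel_left _ _ hR]
    _ = trace X := by rw [trace_mul_comm, Matrix.mul_assoc, nonsing_inv_mul _ hRH, Matrix.mul_one]
    _ = _ := by
        rw [trace_mul_comm, ← Matrix.mul_assoc, hSg]
        simp only [Matrix.mul_assoc]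

theorem trace_mul_inv_mul_conjTranspose_mul (b : ι → ℝ) {V X₄ Pm : Matrix ι ι ℂ}
    {X₃ S R : Matrix κ κ ℂ} {B : Matrix ι κ ℂ}
    (hB : B = V * (diagonal (fun k => (b k : ℂ)) * (1 : Matrix κ κ ℂ).submatrix g id) * R) :
    trace (X₃ * S⁻¹ * Bᴴ * X₄ * (Pm * (1 : Matrix κ κ ℂ).submatrix g id))
      = trace (diagonal (fun k => (b k : ℂ)) * (Vᴴ * X₄) * Pm
          * (X₃ * (S⁻¹ * Rᴴ)).submatrix g g) := by
  set E := (1 : Matrix κ κ ℂ).submatrix g id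
  set Y := X₃ * (S⁻¹ * Rᴴ)
  have hD : (diagonal (fun k => (b k : ℂ)))ᴴ = diagonal (fun k => (b k : ℂ)) := by
    rw [diagonal_conjTranspose]; congr 1; ext k; simp
  calc trace (X₃ * S⁻¹ * Bᴴ * X₄ * (Pm * E))
        = trace ((Y * Eᴴ) * (diagonal (fun k => (b k : ℂ)) * (Vᴴ * X₄) * Pm * E)) := by
          rw [hB]
          simp only [Y, conjTranspose_mul, hD, Matrix.mul_assoc]
    _ = _ := by
          rw [trace_mul_comm, ← submatrix_one_mul_mul_conjTranspose]
          simp only [E, Matrix.mul_assoc]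

theorem iSup_re_trace_conjTranspose_mul_mul_inv (hg : Injective g) (b : ι → ℝ)
    (P : ι → Prop) [DecidablePred P] (hb0 : ∀ k, 0 ≤ b k)
    (hbP : ∀ j, P j → ∀ k, ¬ P k → b k ≤ b j) {V : Matrix ι ι ℂ} (hV : V ∈ unitaryGroup ι ℂ)
    {R : Matrix κ κ ℂ} (hR : IsUnit R.det) {B : Matrix ι κ ℂ}
    (hB : B = V * (diagonal (fun k => (b k : ℂ)) * (1 : Matrix κ κ ℂ).submatrix g id) * R) :
    ⨆ Φ : unitaryGroup ι ℂ, (trace (Bᴴ * (Φ : Matrix ι ι ℂ)ᴴ *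
        diagonal (fun k => if P k then (1 : ℂ) else 0) * (Φ : Matrix ι ι ℂ) * B *
          (Rᴴ * R)⁻¹)).re
      = ∑ k with P k, b k ^ 2 := by
  refine ciSup_eq_of_forall_le_of_eq (fun Φ => ?_) ⟨star V, Unitary.star_mem hV⟩ ?_
  · have hU : (Φ : Matrix ι ι ℂ) * V ∈ unitaryGroup ι ℂ := mul_mem Φ.2 hV
    rw [trace_conjTranspose_mul_mul_inv hg b hR hB]
    refine (Complex.re_le_norm _).trans (norm_trace_diagonal_mul_mul_diagonal_mul_le _ P
      (fun k => sq_nonneg (b k)) (fun j hj k hk => ?_)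
      (normSqDoublySubstochastic_of_mem_unitaryGroup (Unitary.star_mem hU))
      (normSqDoublySubstochastic_of_mem_unitaryGroup hU))
    exact pow_le_pow_left₀ (hb0 k) (hbP j hj k hk) 2
  · rw [trace_conjTranspose_mul_mul_inv hg b hR hB]
    simp only [Unitary.star_mul_self_of_mem hV, conjTranspose_one, Matrix.mul_one,
      trace_diagonal_mul_diagonal_indicator, Complex.ofReal_re]

theorem iSup_norm_trace_mul_inv_mul_conjTranspose_mul (hg : Injective g) (b : ι → ℝ)
    (P : ι → Prop) [DecidablePred P] (hb0 : ∀ k, 0 ≤ b k)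
    (hbP : ∀ j, P j → ∀ k, ¬ P k → b k ≤ b j) {V : Matrix ι ι ℂ} (hV : V ∈ unitaryGroup ι ℂ)
    {R S : Matrix κ κ ℂ} (hS : S.IsHermitian) (hSdet : IsUnit S.det) (hSR : S * S = Rᴴ * R)
    {B : Matrix ι κ ℂ}
    (hB : B = V * (diagonal (fun k => (b k : ℂ)) * (1 : Matrix κ κ ℂ).submatrix g id) * R) :
    ⨆ X₃ : unitaryGroup κ ℂ, ⨆ X₄ : unitaryGroup ι ℂ,
      ‖trace ((X₃ : Matrix κ κ ℂ) * S⁻¹ * Bᴴ * (X₄ : Matrix ι ι ℂ) *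
        (diagonal (fun k => if P k then (1 : ℂ) else 0) * (1 : Matrix κ κ ℂ).submatrix g id))‖
      = ∑ k with P k, b k := by
  have hQ := mul_conjTranspose_mem_unitaryGroup_of_mul_self hS hSdet hSR
  have hle : ∀ (X₃ : unitaryGroup κ ℂ) (X₄ : unitaryGroup ι ℂ),
      ‖trace ((X₃ : Matrix κ κ ℂ) * S⁻¹ * Bᴴ * (X₄ : Matrix ι ι ℂ) *
        (diagonal (fun k => if P k then (1 : ℂ) else 0) * (1 : Matrix κ κ ℂ).submatrix g id))‖
        ≤ ∑ k with P k, b k := fun X₃ X₄ => by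
    rw [trace_mul_inv_mul_conjTranspose_mul b hB]
    exact norm_trace_diagonal_mul_mul_diagonal_mul_le b P hb0 hbP
      (normSqDoublySubstochastic_of_mem_unitaryGroup (mul_mem (Unitary.star_mem hV) X₄.2))
      ((normSqDoublySubstochastic_of_mem_unitaryGroup (mul_mem X₃.2 hQ)).submatrix hg hg)
  have hattain : ‖trace ((star (S⁻¹ * Rᴴ)) * S⁻¹ * Bᴴ * V *
      (diagonal (fun k => if P k then (1 : ℂ) else 0) * (1 : Matrix κ κ ℂ).submatrix g id))‖
        = ∑ k with P k, b k := by
    rw [trace_mul_inv_mul_conjTranspose_mul b hB, ← star_eq_conjTranspose,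
      Unitary.star_mul_self_of_mem hV, Unitary.star_mul_self_of_mem hQ, submatrix_one _ hg,
      Matrix.mul_one, Matrix.mul_one, trace_diagonal_mul_diagonal_indicator, Complex.norm_real,
      Real.norm_of_nonneg (sum_nonneg fun k _ => hb0 k)]
  exact ciSup_eq_of_forall_le_of_eq (fun X₃ => ciSup_le (hle X₃))
    ⟨star (S⁻¹ * Rᴴ), Unitary.star_mem hQ⟩ (ciSup_eq_of_forall_le_of_eq (hle _) ⟨V, hV⟩ hattain)

end GSVD

end Matrix

section TailIndex

variable {p n : ℕ} (h : p ≤ n)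

def tailIndex (k : Fin p) : Fin n := ⟨n - p + k, by omega⟩

theorem tailIndex_injective : Injective (tailIndex h) :=
  fun k k' hkk' => Fin.ext (by simpa [tailIndex] using hkk')

theorem tailIndex_mono : Monotone (tailIndex h) :=
  fun _ _ hkk' => Fin.mk_le_mk.mpr (Nat.add_le_add_left (Fin.le_def.mp hkk') _)

theorem val_add_eq_iff_eq_tailIndex (k : Fin p) (l : Fin n) :
    (l : ℕ) + p = n + k ↔ l = tailIndex h k := by
  simp only [Fin.ext_iff, tailIndex]
  omega

theorem exists_tailIndex_eq {l : Fin n} (hl : n ≤ p + l) : ∃ k, tailIndex h k = l :=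
  ⟨⟨p + l - n, by omega⟩, by simp only [tailIndex, Fin.ext_iff]; omega⟩

theorem of_ite_val_add_eq (c : Fin p → Fin n → ℂ) :
    (of fun (k : Fin p) (l : Fin n) => if (l : ℕ) + p = n + k then c k l else 0)
      = diagonal (fun k => c k (tailIndex h k)) * (1 : Matrix (Fin n) (Fin n) ℂ).submatrix
          (tailIndex h) id := by
  ext k l
  simp only [of_apply, diagonal_mul, submatrix_apply, id, one_apply,
    val_add_eq_iff_eq_tailIndex h, eq_comm (a := l)]
  split_ifs with hl
  · rw [hl, mul_one]
  · rw [mul_zero]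

theorem of_ite_val_add_eq_and (Q : Fin p → Prop) [DecidablePred Q] :
    (of fun (k : Fin p) (l : Fin n) => if (l : ℕ) + p = n + k ∧ Q k then (1 : ℂ) else 0)
      = diagonal (fun k => if Q k then (1 : ℂ) else 0) * (1 : Matrix (Fin n) (Fin n) ℂ).submatrix
          (tailIndex h) id := by
  simp only [ite_and]
  exact of_ite_val_add_eq h _

end TailIndex

theorem sum_filter_le_sub_sum_filter_succ_le {p : ℕ} (f : Fin p → ℝ) (t n : ℕ) (k₀ : Fin p)
    (hk₀ : (k₀ : ℕ) + n = t) :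
    ∑ k ∈ univ.filter (fun k : Fin p => t ≤ (k : ℕ) + n), f k
      - ∑ k ∈ univ.filter (fun k : Fin p => t + 1 ≤ (k : ℕ) + n), f k = f k₀ := by
  have hinsert : univ.filter (fun k : Fin p => t ≤ (k : ℕ) + n)
      = insert k₀ (univ.filter fun k : Fin p => t + 1 ≤ (k : ℕ) + n) := by
    ext k
    simp only [mem_filter, mem_insert, mem_univ, true_and, Fin.ext_iff]
    omega
  rw [hinsert, sum_insert (by simp only [mem_filter, mem_univ, true_and]; omega),
    add_sub_cancel_right]

theorem stmt19_general
    {m p n : ℕ} (hpn : p < n)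
    (A : Matrix (Fin m) (Fin n) ℂ) (B : Matrix (Fin p) (Fin n) ℂ)
    (V : Matrix (Fin p) (Fin p) ℂ) (hV : V ∈ Matrix.unitaryGroup (Fin p) ℂ)
    (R : Matrix (Fin n) (Fin n) ℂ) (hR : IsUnit R.det)
    (β : Fin n → ℝ)
    (hβ0 : ∀ k, 0 ≤ β k) (hmono : Monotone β)
    (hzero : ∀ k : Fin n, (k : ℕ) + p < n → β k = 0)
    (hB : B = V * (Matrix.of fun (k : Fin p) (l : Fin n) =>
        if (l : ℕ) + p = n + (k : ℕ) then Complex.ofReal (β l) else 0) * R)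
    (hAA : Aᴴ * A = Rᴴ * Matrix.diagonal (fun l => Complex.ofReal (1 - β l ^ 2)) * R)
    (S : Matrix (Fin n) (Fin n) ℂ) (hS : S.PosDef)
    (hSsq : S * S = Aᴴ * A + Bᴴ * B)
 :
    ((n - p < n / 2 →
      ∀ i : Fin n, n / 2 ≤ (i : ℕ) →
        (β i ^ 2 =
(⨆ Φ : Matrix.unitaryGroup (Fin p) ℂ,
      (Matrix.trace (Bᴴ * (Φ : Matrix (Fin p) (Fin p) ℂ)ᴴ *
        Matrix.diagonal (fun k : Fin p => if p + (i : ℕ) ≤ (k : ℕ) + n then (1 : ℂ) else 0) *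
        (Φ : Matrix (Fin p) (Fin p) ℂ) * B * (Aᴴ * A + Bᴴ * B)⁻¹)).re) -
(⨆ Φ : Matrix.unitaryGroup (Fin p) ℂ,
      (Matrix.trace (Bᴴ * (Φ : Matrix (Fin p) (Fin p) ℂ)ᴴ *
        Matrix.diagonal (fun k : Fin p => if p + (i : ℕ) + 1 ≤ (k : ℕ) + n then (1 : ℂ) else 0) *
        (Φ : Matrix (Fin p) (Fin p) ℂ) * B * (Aᴴ * A + Bᴴ * B)⁻¹)).re)) ∧
        (β i =
(⨆ X3 : Matrix.unitaryGroup (Fin n) ℂ, ⨆ X4 : Matrix.unitaryGroup (Fin p) ℂ,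
      Norm.norm (Matrix.trace ((X3 : Matrix (Fin n) (Fin n) ℂ) * S⁻¹ * Bᴴ *
        (X4 : Matrix (Fin p) (Fin p) ℂ) *
        Matrix.of (fun (k : Fin p) (l : Fin n) =>
          if (l : ℕ) + p = n + (k : ℕ) ∧ p + (i : ℕ) ≤ (k : ℕ) + n then (1 : ℂ) else 0)))) -
(⨆ X3 : Matrix.unitaryGroup (Fin n) ℂ, ⨆ X4 : Matrix.unitaryGroup (Fin p) ℂ,
      Norm.norm (Matrix.trace ((X3 : Matrix (Fin n) (Fin n) ℂ) * S⁻¹ * Bᴴ *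
        (X4 : Matrix (Fin p) (Fin p) ℂ) *
        Matrix.of (fun (k : Fin p) (l : Fin n) =>
          if (l : ℕ) + p = n + (k : ℕ) ∧ p + (i : ℕ) + 1 ≤ (k : ℕ) + n then (1 : ℂ) else 0)))))) ∧
     (n / 2 < n - p →
      (∀ k : Fin n, n / 2 ≤ (k : ℕ) → (k : ℕ) + p < n → β k = 0) ∧
      ∀ i : Fin n, n ≤ p + (i : ℕ) →
        (β i ^ 2 =
(⨆ Φ : Matrix.unitaryGroup (Fin p) ℂ,
      (Matrix.trace (Bᴴ * (Φ : Matrix (Fin p) (Fin p) ℂ)ᴴ *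
        Matrix.diagonal (fun k : Fin p => if p + (i : ℕ) ≤ (k : ℕ) + n then (1 : ℂ) else 0) *
        (Φ : Matrix (Fin p) (Fin p) ℂ) * B * (Aᴴ * A + Bᴴ * B)⁻¹)).re) -
(⨆ Φ : Matrix.unitaryGroup (Fin p) ℂ,
      (Matrix.trace (Bᴴ * (Φ : Matrix (Fin p) (Fin p) ℂ)ᴴ *
        Matrix.diagonal (fun k : Fin p => if p + (i : ℕ) + 1 ≤ (k : ℕ) + n then (1 : ℂ) else 0) *
        (Φ : Matrix (Fin p) (Fin p) ℂ) * B * (Aᴴ * A + Bᴴ * B)⁻¹)).re)) ∧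
        (β i =
(⨆ X3 : Matrix.unitaryGroup (Fin n) ℂ, ⨆ X4 : Matrix.unitaryGroup (Fin p) ℂ,
      Norm.norm (Matrix.trace ((X3 : Matrix (Fin n) (Fin n) ℂ) * S⁻¹ * Bᴴ *
        (X4 : Matrix (Fin p) (Fin p) ℂ) *
        Matrix.of (fun (k : Fin p) (l : Fin n) =>
          if (l : ℕ) + p = n + (k : ℕ) ∧ p + (i : ℕ) ≤ (k : ℕ) + n then (1 : ℂ) else 0)))) -
(⨆ X3 : Matrix.unitaryGroup (Fin n) ℂ, ⨆ X4 : Matrix.unitaryGroup (Fin p) ℂ,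
      Norm.norm (Matrix.trace ((X3 : Matrix (Fin n) (Fin n) ℂ) * S⁻¹ * Bᴴ *
        (X4 : Matrix (Fin p) (Fin p) ℂ) *
        Matrix.of (fun (k : Fin p) (l : Fin n) =>
          if (l : ℕ) + p = n + (k : ℕ) ∧ p + (i : ℕ) + 1 ≤ (k : ℕ) + n then (1 : ℂ) else 0))))))) := by
  have hg := tailIndex_injective hpn.le
  rw [of_ite_val_add_eq hpn.le] at hB
  have hM := conjTranspose_mul_add_conjTranspose_mul_eq hg β (fun l hl => hzero l (by
    by_contra h
    exact hl (exists_tailIndex_eq hpn.le (by omega)))) hV hB hAA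
  have hSdet : IsUnit S.det := (isUnit_iff_isUnit_det S).mp hS.isUnit
  have hb0 : ∀ k, 0 ≤ β (tailIndex hpn.le k) := fun k => hβ0 _
  have hbP : ∀ t : ℕ, ∀ j : Fin p, t ≤ (j : ℕ) + n → ∀ k : Fin p, ¬ t ≤ (k : ℕ) + n →
      β (tailIndex hpn.le k) ≤ β (tailIndex hpn.le j) := fun t j hj k hk =>
    hmono (tailIndex_mono hpn.le (Fin.le_def.mpr (by omega)))
  refine ⟨fun _ i hi => ?_, fun _ => ⟨fun k _ hk => hzero k hk, fun i hi => ?_⟩⟩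
  all_goals
    obtain ⟨k₀, rfl⟩ := exists_tailIndex_eq hpn.le (l := i) (by omega)
    have hk₀ := (val_add_eq_iff_eq_tailIndex hpn.le k₀ _).mpr rfl
    rw [of_ite_val_add_eq_and hpn.le, of_ite_val_add_eq_and hpn.le, hM,
      iSup_re_trace_conjTranspose_mul_mul_inv hg _ _ hb0 (hbP _) hV hR hB,
      iSup_re_trace_conjTranspose_mul_mul_inv hg _ _ hb0 (hbP _) hV hR hB,
      iSup_norm_trace_mul_inv_mul_conjTranspose_mul hg _ _ hb0 (hbP _) hV hS.isHermitian hSdet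
        (hSsq.trans hM) hB,
      iSup_norm_trace_mul_inv_mul_conjTranspose_mul hg _ _ hb0 (hbP _) hV hS.isHermitian hSdet
        (hSsq.trans hM) hB,
      sum_filter_le_sub_sum_filter_succ_le _ _ _ k₀ (by omega),
      sum_filter_le_sub_sum_filter_succ_le _ _ _ k₀ (by omega)]
    exact ⟨rfl, rfl⟩

theorem stmt19
    {m p n : ℕ} (hpn : p < n)
    (A : Matrix (Fin m) (Fin n) ℂ) (B : Matrix (Fin p) (Fin n) ℂ)
    (hrank : (Matrix.fromRows A B).rank = n)
    (V : Matrix (Fin p) (Fin p) ℂ) (hV : V ∈ Matrix.unitaryGroup (Fin p) ℂ)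
    (R : Matrix (Fin n) (Fin n) ℂ) (hR : IsUnit R.det)
    (β : Fin n → ℝ)
    (hβ0 : ∀ k, 0 ≤ β k) (hβ1 : ∀ k, β k ≤ 1) (hmono : Monotone β)
    (hzero : ∀ k : Fin n, (k : ℕ) + p < n → β k = 0)
    (hB : B = V * (Matrix.of fun (k : Fin p) (l : Fin n) =>
        if (l : ℕ) + p = n + (k : ℕ) then Complex.ofReal (β l) else 0) * R)
    (hAA : Aᴴ * A = Rᴴ * Matrix.diagonal (fun l => Complex.ofReal (1 - β l ^ 2)) * R)
    (S : Matrix (Fin n) (Fin n) ℂ) (hS : S.PosDef)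
    (hSsq : S * S = Aᴴ * A + Bᴴ * B)
 :
    ((n - p < n / 2 →
      ∀ i : Fin n, n / 2 ≤ (i : ℕ) →
        (β i ^ 2 =
(⨆ Φ : Matrix.unitaryGroup (Fin p) ℂ,
      (Matrix.trace (Bᴴ * (Φ : Matrix (Fin p) (Fin p) ℂ)ᴴ *
        Matrix.diagonal (fun k : Fin p => if p + (i : ℕ) ≤ (k : ℕ) + n then (1 : ℂ) else 0) *
        (Φ : Matrix (Fin p) (Fin p) ℂ) * B * (Aᴴ * A + Bᴴ * B)⁻¹)).re) -
(⨆ Φ : Matrix.unitaryGroup (Fin p) ℂ,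
      (Matrix.trace (Bᴴ * (Φ : Matrix (Fin p) (Fin p) ℂ)ᴴ *
        Matrix.diagonal (fun k : Fin p => if p + (i : ℕ) + 1 ≤ (k : ℕ) + n then (1 : ℂ) else 0) *
        (Φ : Matrix (Fin p) (Fin p) ℂ) * B * (Aᴴ * A + Bᴴ * B)⁻¹)).re)) ∧
        (β i =
(⨆ X3 : Matrix.unitaryGroup (Fin n) ℂ, ⨆ X4 : Matrix.unitaryGroup (Fin p) ℂ,
      Norm.norm (Matrix.trace ((X3 : Matrix (Fin n) (Fin n) ℂ) * S⁻¹ * Bᴴ *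
        (X4 : Matrix (Fin p) (Fin p) ℂ) *
        Matrix.of (fun (k : Fin p) (l : Fin n) =>
          if (l : ℕ) + p = n + (k : ℕ) ∧ p + (i : ℕ) ≤ (k : ℕ) + n then (1 : ℂ) else 0)))) -
(⨆ X3 : Matrix.unitaryGroup (Fin n) ℂ, ⨆ X4 : Matrix.unitaryGroup (Fin p) ℂ,
      Norm.norm (Matrix.trace ((X3 : Matrix (Fin n) (Fin n) ℂ) * S⁻¹ * Bᴴ *
        (X4 : Matrix (Fin p) (Fin p) ℂ) *
        Matrix.of (fun (k : Fin p) (l : Fin n) =>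
          if (l : ℕ) + p = n + (k : ℕ) ∧ p + (i : ℕ) + 1 ≤ (k : ℕ) + n then (1 : ℂ) else 0)))))) ∧
     (n / 2 < n - p →
      (∀ k : Fin n, n / 2 ≤ (k : ℕ) → (k : ℕ) + p < n → β k = 0) ∧
      ∀ i : Fin n, n ≤ p + (i : ℕ) →
        (β i ^ 2 =
(⨆ Φ : Matrix.unitaryGroup (Fin p) ℂ,
      (Matrix.trace (Bᴴ * (Φ : Matrix (Fin p) (Fin p) ℂ)ᴴ *
        Matrix.diagonal (fun k : Fin p => if p + (i : ℕ) ≤ (k : ℕ) + n then (1 : ℂ) else 0) *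
        (Φ : Matrix (Fin p) (Fin p) ℂ) * B * (Aᴴ * A + Bᴴ * B)⁻¹)).re) -
(⨆ Φ : Matrix.unitaryGroup (Fin p) ℂ,
      (Matrix.trace (Bᴴ * (Φ : Matrix (Fin p) (Fin p) ℂ)ᴴ *
        Matrix.diagonal (fun k : Fin p => if p + (i : ℕ) + 1 ≤ (k : ℕ) + n then (1 : ℂ) else 0) *
        (Φ : Matrix (Fin p) (Fin p) ℂ) * B * (Aᴴ * A + Bᴴ * B)⁻¹)).re)) ∧
        (β i =
(⨆ X3 : Matrix.unitaryGroup (Fin n) ℂ, ⨆ X4 : Matrix.unitaryGroup (Fin p) ℂ,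
      Norm.norm (Matrix.trace ((X3 : Matrix (Fin n) (Fin n) ℂ) * S⁻¹ * Bᴴ *
        (X4 : Matrix (Fin p) (Fin p) ℂ) *
        Matrix.of (fun (k : Fin p) (l : Fin n) =>
          if (l : ℕ) + p = n + (k : ℕ) ∧ p + (i : ℕ) ≤ (k : ℕ) + n then (1 : ℂ) else 0)))) -
(⨆ X3 : Matrix.unitaryGroup (Fin n) ℂ, ⨆ X4 : Matrix.unitaryGroup (Fin p) ℂ,
      Norm.norm (Matrix.trace ((X3 : Matrix (Fin n) (Fin n) ℂ) * S⁻¹ * Bᴴ *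
        (X4 : Matrix (Fin p) (Fin p) ℂ) *
        Matrix.of (fun (k : Fin p) (l : Fin n) =>
          if (l : ℕ) + p = n + (k : ℕ) ∧ p + (i : ℕ) + 1 ≤ (k : ℕ) + n then (1 : ℂ) else 0))))))) :=
  stmt19_general hpn A B V hV R hR β hβ0 hmono hzero hB hAA S hS hSsq
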